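/- arXiv:1310.5023 — 4 statements merged into one kernel-verified Lean document; each statement's English description precedes it below -/
import Mathlib

section
/- For any semigroup S with a unary operation satisfying x̄x = xx̄, x̄²x = x̄, x²x̄ = x̿, (x̄x)‾ = x̄x, and (xy)‾x = x(yx)‾, and for integers p, q ≥ 0, the identity x^{ω+p}·x^{ω+q} = x^{ω+p+q} holds, where x^{ω+r} := x̄ x^{r+1} for r ≥ 0. -/
/-! Since `x̄` commutes with `x`, it commutes with every power of `x`; so
`x̄ xᵖ⁺¹ · x̄ x^{q+1} = (x̄ x̄ x) x^{p+q+1}`, and `x̄² x = x̄` finishes the proof. -/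

/-- `spow x n` is the `(n+1)`-st power of `x` in a semigroup: `spow x 0 = x`. -/
def spow {S : Type*} [Semigroup S] (x : S) : ℕ → S
  | 0 => x
  | n + 1 => spow x n * x

section Spow

variable {S : Type*} [Semigroup S]

theorem Commute.spow_right {a x : S} (h : Commute a x) : ∀ n, Commute a (spow x n)
  | 0 => h
  | n + 1 => (h.spow_right n).mul_right h

theorem spow_succ' (x : S) (n : ℕ) : spow x (n + 1) = x * spow x n :=
  ((Commute.refl x).spow_right n).symm.eq

theorem spow_add_succ (x : S) (p : ℕ) : ∀ q, spow x (p + q + 1) = spow x p * spow x q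
  | 0 => rfl
  | q + 1 => by
    show spow x (p + q + 1) * x = spow x p * (spow x q * x)
    rw [spow_add_succ x p q, mul_assoc]

end Spow

theorem stmt11_general {S : Type*} [Semigroup S] (bar : S → S)
    (h0 : ∀ x : S, bar x * x = x * bar x)
    (h1 : ∀ x : S, bar x * bar x * x = bar x)
    (x : S) (p q : ℕ) :
    (bar x * spow x p) * (bar x * spow x q) = bar x * spow x (p + q) := by
  have hcomm : Commute (bar x) (spow x p) := Commute.spow_right (h0 x) p
  calc (bar x * spow x p) * (bar x * spow x q)
      = bar x * bar x * (spow x p * spow x q) := by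
        rw [mul_assoc, ← mul_assoc (spow x p), ← hcomm.eq]
        simp only [mul_assoc]
    _ = bar x * bar x * x * spow x (p + q) := by
        rw [← spow_add_succ, spow_succ']
        simp only [mul_assoc]
    _ = bar x * spow x (p + q) := by rw [h1]

/-- For any unary semigroup satisfying `x̄x = xx̄`, `x̄²x = x̄`,
`x²x̄ = bar (bar x)`, `bar (x̄x) = x̄x`, and `bar (xy) x = x bar (yx)`, and all
`p, q ≥ 0`, the identity `x^{ω+p} · x^{ω+q} = x^{ω+p+q}` holds, where
`x^{ω+r} := x̄ x^{r+1} = bar x * spow x r`. -/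
theorem stmt11 {S : Type*} [Semigroup S] (bar : S → S)
    (h0 : ∀ x : S, bar x * x = x * bar x)
    (h1 : ∀ x : S, bar x * bar x * x = bar x)
    (h2 : ∀ x : S, x * x * bar x = bar (bar x))
    (h3 : ∀ x : S, bar (bar x * x) = bar x * x)
    (h4 : ∀ x y : S, bar (x * y) * x = x * bar (y * x))
    (x : S) (p q : ℕ) :
    (bar x * spow x p) * (bar x * spow x q) = bar x * spow x (p + q) :=
  stmt11_general bar h0 h1 x p q
end

section
/- The semigroup Sing(A) of singular words is 𝒥-trivial: if two 𝒮-classes α, β satisfy α = σ₁βτ₁ and β = σ₂ατ₂ for some (possibly empty) swords σᵢ, τᵢ, then α = β. -/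
/-- The free algebra `Z(A)` over the alphabet `A` with one binary operation and
countably many unary operations `x ↦ x^{ω+q}`, `q ∈ ℤ`, presented as a term
algebra (associativity is imposed as part of the congruence below). -/
inductive ZWord (A : Type*) where
  | letter : A → ZWord A
  | mul : ZWord A → ZWord A → ZWord A
  | omegaPow : ZWord A → ℤ → ZWord A

/-- The fully invariant congruence 𝒮 on `Z(A)` generated by associativity and
the pairs `(x^{ω+q}, x x^{ω+q-1})`, `(x^{ω+q}, x^{ω+q-1} x)`, and
`(x (yx)^{ω+q}, (xy)^{ω+q} x)` for all `q ∈ ℤ`. -/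
inductive SRel {A : Type*} : ZWord A → ZWord A → Prop where
  | assoc (a b c : ZWord A) : SRel ((a.mul b).mul c) (a.mul (b.mul c))
  | unwind_left (x : ZWord A) (q : ℤ) :
      SRel (x.omegaPow q) (x.mul (x.omegaPow (q - 1)))
  | unwind_right (x : ZWord A) (q : ℤ) :
      SRel (x.omegaPow q) ((x.omegaPow (q - 1)).mul x)
  | roll (x y : ZWord A) (q : ℤ) :
      SRel (x.mul ((y.mul x).omegaPow q)) (((x.mul y).omegaPow q).mul x)
  | refl (x : ZWord A) : SRel x x
  | symm {a b : ZWord A} : SRel a b → SRel b a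
  | trans {a b c : ZWord A} : SRel a b → SRel b c → SRel a c
  | mul_congr {a b c d : ZWord A} : SRel a b → SRel c d → SRel (a.mul c) (b.mul d)
  | omegaPow_congr {a b : ZWord A} (q : ℤ) : SRel a b → SRel (a.omegaPow q) (b.omegaPow q)

/-- The 𝒮-class of `α` equals `σ₁ β τ₁` for some possibly empty swords
`σ₁, τ₁`: i.e. `β` is a 𝒥-factor of `α` in `Sing(A)`. -/
def JFactor {A : Type*} (β α : ZWord A) : Prop :=
  SRel α β ∨ (∃ s : ZWord A, SRel α (s.mul β)) ∨
    (∃ t : ZWord A, SRel α (β.mul t)) ∨ ∃ s t : ZWord A, SRel α ((s.mul β).mul t)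


/-!
The length of a sword is a polynomial in `ω` that is invariant under 𝒮, and the length of
every sword, evaluated at a large enough integer `ω = n`, is positive. So a proper factorisation
`α = σ β τ` makes `|β|(n) < |α|(n)` for all large `n`; two such factorisations in opposite
directions are incompatible, so one of them must be the trivial one `α = β`.
-/

open Filter

namespace ZWord

variable {A : Type*}

/-- The length polynomial of a sword, evaluated at `ω = n`. -/
def lengthAt : ZWord A → ℤ → ℤ
  | letter _, _ => 1
  | mul a b, n => a.lengthAt n + b.lengthAt n
  | omegaPow x q, n => (n + q) * x.lengthAt n

@[simp] lemma lengthAt_letter (a : A) (n : ℤ) : (letter a).lengthAt n = 1 := rfl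

@[simp] lemma lengthAt_mul (a b : ZWord A) (n : ℤ) :
    (a.mul b).lengthAt n = a.lengthAt n + b.lengthAt n := rfl

@[simp] lemma lengthAt_omegaPow (x : ZWord A) (q n : ℤ) :
    (x.omegaPow q).lengthAt n = (n + q) * x.lengthAt n := rfl

lemma eventually_lengthAt_pos (w : ZWord A) : ∀ᶠ n in atTop, 0 < w.lengthAt n := by
  induction w with
  | letter a => exact .of_forall fun n => by simp
  | mul a b iha ihb =>
    filter_upwards [iha, ihb] with n ha hb
    simpa using add_pos ha hb
  | omegaPow x q ih =>
    filter_upwards [ih, eventually_gt_atTop (-q)] with n hx hn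
    simpa using mul_pos (by omega) hx

end ZWord

open ZWord

lemma SRel.lengthAt_eq {A : Type*} {a b : ZWord A} (h : SRel a b) (n : ℤ) :
    a.lengthAt n = b.lengthAt n := by
  induction h with
  | refl => rfl
  | symm _ ih => exact ih.symm
  | trans _ _ ih₁ ih₂ => exact ih₁.trans ih₂
  | mul_congr _ _ ih₁ ih₂ => simp [ih₁, ih₂]
  | omegaPow_congr q _ ih => simp [ih]
  | _ => simp only [lengthAt_mul, lengthAt_omegaPow]; ring

lemma JFactor.eq_or_eventually_lengthAt_lt {A : Type*} {β α : ZWord A} (h : JFactor β α) :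
    SRel α β ∨ ∀ᶠ n in atTop, β.lengthAt n < α.lengthAt n := by
  rcases h with h | ⟨s, h⟩ | ⟨t, h⟩ | ⟨s, t, h⟩
  · exact .inl h
  all_goals right
  · filter_upwards [s.eventually_lengthAt_pos] with n hs
    simp only [h.lengthAt_eq n, lengthAt_mul]; omega
  · filter_upwards [t.eventually_lengthAt_pos] with n ht
    simp only [h.lengthAt_eq n, lengthAt_mul]; omega
  · filter_upwards [s.eventually_lengthAt_pos, t.eventually_lengthAt_pos] with n hs ht
    simp only [h.lengthAt_eq n, lengthAt_mul]; omega

/-- `Sing(A)` is 𝒥-trivial: if `α = σ₁βτ₁` and `β = σ₂ατ₂` for some possibly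
empty swords `σᵢ, τᵢ`, then `α = β` in `Sing(A)`. -/
theorem stmt13 {A : Type*} (α β : ZWord A)
    (h1 : JFactor β α) (h2 : JFactor α β) : SRel α β := by
  rcases h1.eq_or_eventually_lengthAt_lt with h | hβα
  · exact h
  rcases h2.eq_or_eventually_lengthAt_lt with h | hαβ
  · exact h.symm
  obtain ⟨n, hβα, hαβ⟩ := (hβα.and hαβ).exists
  exact absurd hβα hαβ.asymm
end

section
/- In the free Burnside semigroup B(A, m, n) = A⁺/(x^m = x^{m+n}) with m ≥ 3, n ≥ 1, assuming every element has only finitely many factors (prefixes, suffixes, and subwords), the complement of the set of factors of any element b is an ideal, and the associated Rees quotient is finite; consequently B(A, m, n) is residually finite. -/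
/-- The congruence on the free semigroup `A⁺` generated by all instances of the
Burnside identity `xᵐ = x^{m+n}` (recall `spow u k = u^{k+1}`). -/
inductive BRel (A : Type) (m n : ℕ) : FreeSemigroup A → FreeSemigroup A → Prop where
  | base (u : FreeSemigroup A) : BRel A m n (spow u (m - 1)) (spow u (m + n - 1))
  | refl (u : FreeSemigroup A) : BRel A m n u u
  | symm {u v : FreeSemigroup A} : BRel A m n u v → BRel A m n v u
  | trans {u v w : FreeSemigroup A} : BRel A m n u v → BRel A m n v w → BRel A m n u w
  | mul_congr {u₁ v₁ u₂ v₂ : FreeSemigroup A} :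
      BRel A m n u₁ v₁ → BRel A m n u₂ v₂ → BRel A m n (u₁ * u₂) (v₁ * v₂)

/-- The free Burnside semigroup `B(A, m, n) = A⁺/(xᵐ = x^{m+n})`. -/
def BS (A : Type) (m n : ℕ) : Type := Quot (BRel A m n)

instance {A : Type} {m n : ℕ} : Mul (BS A m n) :=
  ⟨Quot.map₂ (· * ·)
    (fun a _ _ h => BRel.mul_congr (BRel.refl a) h)
    (fun _ _ b h => BRel.mul_congr h (BRel.refl b))⟩

/-- `c` is a factor of `b`: `b = s c t` with `s, t` possibly empty. -/
def IsFactor {S : Type*} [Mul S] (c b : S) : Prop :=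
  c = b ∨ (∃ s, b = s * c) ∨ (∃ t, b = c * t) ∨ ∃ s t, b = (s * c) * t

/-- `I` is a (two-sided) ideal of the semigroup `S`. -/
def IsIdeal {S : Type*} [Mul S] (I : Set S) : Prop :=
  ∀ a ∈ I, ∀ s : S, s * a ∈ I ∧ a * s ∈ I

/-- The Rees congruence of an ideal `I`: it collapses `I` to one element. -/
def ReesRel {S : Type*} (I : Set S) (a b : S) : Prop :=
  a = b ∨ (a ∈ I ∧ b ∈ I)

/-! Factors of a factor of `b` are factors of `b`, so the non-factors of `b` form an ideal, and
the Rees quotient by it has at most `|F_b| + 1` elements. In the quotient for `a`, the class of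
`a` is a singleton, which separates `a` from any `b ≠ a`. -/

instance {A : Type} {m n : ℕ} : Semigroup (BS A m n) where
  mul_assoc := by
    rintro ⟨x⟩ ⟨y⟩ ⟨z⟩
    exact congrArg (Quot.mk _) (mul_assoc x y z)

section Rees

variable {S : Type*}

theorem reesRel_equivalence (I : Set S) : Equivalence (ReesRel I) where
  refl _ := Or.inl rfl
  symm := by
    rintro _ _ (rfl | ⟨hx, hy⟩)
    exacts [Or.inl rfl, Or.inr ⟨hy, hx⟩]
  trans := by
    rintro _ _ _ (rfl | ⟨hx, hy⟩) h
    · exact h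
    · rcases h with rfl | ⟨-, hz⟩
      exacts [Or.inr ⟨hx, hy⟩, Or.inr ⟨hx, hz⟩]

theorem finite_quot_reesRel {I : Set S} (hI : Iᶜ.Finite) : Finite (Quot (ReesRel I)) := by
  have hcollapse : (Quot.mk (ReesRel I) '' I).Subsingleton := by
    rintro _ ⟨x, hx, rfl⟩ _ ⟨y, hy, rfl⟩
    exact Quot.sound (Or.inr ⟨hx, hy⟩)
  have huniv : Set.univ = Quot.mk (ReesRel I) '' I ∪ Quot.mk (ReesRel I) '' Iᶜ := by
    rw [← Set.image_union, Set.union_compl_self, Set.image_univ, Set.range_quot_mk]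
  exact Set.finite_univ_iff.mp (huniv ▸ hcollapse.finite.union (hI.image _))

def IsIdeal.reesCon [Mul S] {I : Set S} (hI : IsIdeal I) : Con S where
  r := ReesRel I
  iseqv := reesRel_equivalence I
  mul' := by
    rintro w x y z (rfl | ⟨hw, hx⟩) (rfl | ⟨hy, hz⟩)
    · exact Or.inl rfl
    · exact Or.inr ⟨(hI y hy w).1, (hI z hz w).1⟩
    · exact Or.inr ⟨(hI w hw y).2, (hI x hx y).2⟩
    · exact Or.inr ⟨(hI w hw y).2, (hI x hx z).2⟩

end Rees

section Factors

variable {S : Type*} [Semigroup S]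

theorem IsFactor.of_mul_left {a s b : S} (h : IsFactor (s * a) b) : IsFactor a b := by
  rcases h with h | ⟨u, h⟩ | ⟨t, h⟩ | ⟨u, t, h⟩
  · exact Or.inr (Or.inl ⟨s, h.symm⟩)
  · exact Or.inr (Or.inl ⟨u * s, by rw [h, mul_assoc]⟩)
  · exact Or.inr (Or.inr (Or.inr ⟨s, t, h⟩))
  · exact Or.inr (Or.inr (Or.inr ⟨u * s, t, by rw [h, ← mul_assoc u s a]⟩))

theorem IsFactor.of_mul_right {a s b : S} (h : IsFactor (a * s) b) : IsFactor a b := by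
  rcases h with h | ⟨u, h⟩ | ⟨t, h⟩ | ⟨u, t, h⟩
  · exact Or.inr (Or.inr (Or.inl ⟨s, h.symm⟩))
  · exact Or.inr (Or.inr (Or.inr ⟨u, s, by rw [h, mul_assoc]⟩))
  · exact Or.inr (Or.inr (Or.inl ⟨s * t, by rw [h, mul_assoc]⟩))
  · exact Or.inr (Or.inr (Or.inr ⟨u, s * t, by rw [h, mul_assoc, mul_assoc, mul_assoc]⟩))

theorem isIdeal_compl_setOf_isFactor (b : S) : IsIdeal {c | IsFactor c b}ᶜ :=
  fun _ ha _ => ⟨fun h => ha h.of_mul_left, fun h => ha h.of_mul_right⟩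

theorem finite_quot_reesRel_compl_setOf_isFactor {b : S} (hb : {c | IsFactor c b}.Finite) :
    Finite (Quot (ReesRel {c | IsFactor c b}ᶜ)) :=
  finite_quot_reesRel (by rwa [compl_compl])

theorem exists_finite_mulHom_ne {S : Type} [Semigroup S] {a b : S}
    (ha : {c | IsFactor c a}.Finite) (hab : a ≠ b) :
    ∃ (T : Type) (_ : Semigroup T) (_ : Finite T) (f : S →ₙ* T), f a ≠ f b := by
  let c := (isIdeal_compl_setOf_isFactor a).reesCon
  refine ⟨c.Quotient, inferInstance, finite_quot_reesRel_compl_setOf_isFactor ha, c.mkMulHom, ?_⟩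
  rintro hc
  rcases Con.eq c |>.mp hc with h | ⟨ha', -⟩
  exacts [hab h, ha' (Or.inl rfl)]

end Factors

theorem stmt18_general {A : Type} (m n : ℕ)
    (hfac : ∀ b : BS A m n, {c : BS A m n | IsFactor c b}.Finite) :
    (∀ b : BS A m n, IsIdeal {c : BS A m n | IsFactor c b}ᶜ) ∧
    (∀ b : BS A m n, Finite (Quot (ReesRel {c : BS A m n | IsFactor c b}ᶜ))) ∧
    (∀ a b : BS A m n, a ≠ b →
      ∃ (T : Type) (mulT : T → T → T) (f : BS A m n → T),
        Finite T ∧ (∀ x y z : T, mulT (mulT x y) z = mulT x (mulT y z)) ∧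
        (∀ u v : BS A m n, f (u * v) = mulT (f u) (f v)) ∧ f a ≠ f b) := by
  refine ⟨isIdeal_compl_setOf_isFactor, fun b => finite_quot_reesRel_compl_setOf_isFactor (hfac b),
    fun a b hab => ?_⟩
  obtain ⟨T, _, hT, f, hf⟩ := exists_finite_mulHom_ne (hfac a) hab
  exact ⟨T, (· * ·), f, hT, mul_assoc, map_mul f, hf⟩

/-- In `B(A, m, n)` with `m ≥ 3`, `n ≥ 1`, assuming every element has only
finitely many factors, the complement of the factor set of any `b` is an
ideal, the corresponding Rees quotient is finite, and consequently
`B(A, m, n)` is residually finite. -/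
theorem stmt18 {A : Type} (m n : ℕ) (hm : 3 ≤ m) (hn : 1 ≤ n)
    (hfac : ∀ b : BS A m n, {c : BS A m n | IsFactor c b}.Finite) :
    (∀ b : BS A m n, IsIdeal {c : BS A m n | IsFactor c b}ᶜ) ∧
    (∀ b : BS A m n, Finite (Quot (ReesRel {c : BS A m n | IsFactor c b}ᶜ))) ∧
    (∀ a b : BS A m n, a ≠ b →
      ∃ (T : Type) (mulT : T → T → T) (f : BS A m n → T),
        Finite T ∧ (∀ x y z : T, mulT (mulT x y) z = mulT x (mulT y z)) ∧
        (∀ u v : BS A m n, f (u * v) = mulT (f u) (f v)) ∧ f a ≠ f b) :=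
  stmt18_general m n hfac
end

section
/- In a unary semigroup satisfying x̄x = xx̄, x̄²x = x̄, x²x̄ = x̿, and (x^n)‾ = x̄^n for all n ≥ 2, the identity (x^n)^{ω+q} = x^{ω+nq} holds for all n ≥ 2 and q ≥ 0, where x^{ω+r} := x̄·x^{r+1} for r ≥ 0. -/
/-! By `bar (xᵏ) = (bar x)ᵏ`, the left side is `(bar x)ᵏ x^{k(q+1)} = (bar x)ᵏ x^{k-1} x^{kq+1}`.
Since `(bar x)² x = bar x`, each factor `x` cancels one of the surplus copies of `bar x`, so
`(bar x)ᵏ x^{k-1} = bar x`. -/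

section

variable {S : Type*} [Semigroup S]

theorem spow_mul_spow (x : S) (m n : ℕ) : spow x m * spow x n = spow x (m + n + 1) := by
  induction n with
  | zero => rfl
  | succ n ih => rw [spow, ← mul_assoc, ih]; rfl

theorem spow_spow (x : S) (m n : ℕ) : spow (spow x m) n = spow x (m * n + m + n) := by
  induction n with
  | zero => simp only [spow, mul_zero, add_zero, zero_add]
  | succ n ih =>
    rw [spow, ih, spow_mul_spow]
    congr 1
    ring

theorem spow_succ_mul_spow_of_mul_mul_eq {a b : S} (h : a * a * b = a) (m : ℕ) :
    spow a (m + 1) * spow b m = a := by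
  induction m with
  | zero => exact h
  | succ m ih =>
    have cancel : spow a (m + 2) * b = spow a (m + 1) := by
      show spow a m * a * a * b = spow a m * a
      rw [mul_assoc (spow a m), mul_assoc (spow a m), h]
    rw [spow_succ' b, ← mul_assoc, cancel, ih]

end

/-- Here `xᵏ = spow x (k - 1)` and `x^{ω+r} = bar x * spow x r`. -/
theorem stmt19_general {S : Type*} [Semigroup S] (bar : S → S)
    (h1 : ∀ x : S, bar x * bar x * x = bar x)
    (h3 : ∀ n : ℕ, 2 ≤ n → ∀ x : S, bar (spow x (n - 1)) = spow (bar x) (n - 1))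
    (x : S) (k q : ℕ) (hk : 2 ≤ k) :
    bar (spow x (k - 1)) * spow (spow x (k - 1)) q = bar x * spow x (k * q) := by
  obtain ⟨t, rfl⟩ : ∃ t, k = t + 2 := ⟨k - 2, by omega⟩
  have split : spow x ((t + 1) * q + (t + 1) + q) = spow x t * spow x ((t + 2) * q) := by
    rw [spow_mul_spow]
    congr 1
    ring
  rw [h3 _ hk, show t + 2 - 1 = t + 1 from rfl, spow_spow, split, ← mul_assoc,
    spow_succ_mul_spow_of_mul_mul_eq (h1 x)]

/-- In a unary semigroup satisfying `x̄x = xx̄`, `x̄²x = x̄`,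
`x²x̄ = bar (bar x)`, and `bar (xⁿ) = (bar x)ⁿ` for all `n ≥ 2`, the identity
`(xᵏ)^{ω+q} = x^{ω+kq}` holds for all `k ≥ 2`, `q ≥ 0`, where
`x^{ω+r} := x̄ x^{r+1} = bar x * spow x r` and `xᵏ = spow x (k-1)`. -/
theorem stmt19 {S : Type*} [Semigroup S] (bar : S → S)
    (h0 : ∀ x : S, bar x * x = x * bar x)
    (h1 : ∀ x : S, bar x * bar x * x = bar x)
    (h2 : ∀ x : S, x * x * bar x = bar (bar x))
    (h3 : ∀ n : ℕ, 2 ≤ n → ∀ x : S, bar (spow x (n - 1)) = spow (bar x) (n - 1))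
    (x : S) (k q : ℕ) (hk : 2 ≤ k) :
    bar (spow x (k - 1)) * spow (spow x (k - 1)) q = bar x * spow x (k * q) :=
  stmt19_general bar h1 h3 x k q hk
end
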